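/- arXiv:2108.12277 — 4 statements merged into one kernel-verified Lean document; each statement's English description precedes it below -/
import Mathlib

section
/- Let M ≥ 1 be a natural number, ρ > 0 and μ > 0 real numbers, λ = μρ, ω a real number. Let π_M = (ρ^M/M!) / (Σ_{k=0}^{M} ρ^k/k!) be the Erlang blocking probability and set g = λ·ω·π_M. Define v : ℤ → ℝ by v(q) = (g/(μρ)) · Σ_{i=1}^{q} Σ_{m=0}^{q−i} ((q−i)!/(q−i−m)!) · ρ^{−m} for q ≥ 1 and v(q) = 0 for q ≤ 0. Then v is an exact solution of Howard's equation for the symmetric single-rate loss system with capacity M: (a) for every integer q with 0 ≤ q < M, λ·(v(q+1) − v(q)) − μ·q·(v(q) − v(q−1)) = g; and (b) at the full state q = M, −μ·M·(v(M) − v(M−1)) = g − λ·ω. -/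
/-!
The increments of formula (9) are `v (n + 1) - v n = (g / λ) / B(n, ρ)`, where `B` is the Erlang
blocking probability: reflecting the inner sum turns `∑ₘ n!/(n-m)! ρ⁻ᵐ` into `n!/ρⁿ · ∑ⱼ≤ₙ ρʲ/j!`.
Howard's equation at the states `q < M` is then exactly the classical recursion
`ρ / B(q) = ρ + q / B(q - 1)` for the inverse Erlang B function, and at the full state it is the
same recursion multiplied by `B(M)`.
-/

open Finset Nat

noncomputable section

def expTrunc (ρ : ℝ) (n : ℕ) : ℝ :=
  ∑ k ∈ range (n + 1), ρ ^ k / k !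

def erlangB (ρ : ℝ) (M : ℕ) : ℝ :=
  ρ ^ M / M ! / expTrunc ρ M

lemma expTrunc_pos {ρ : ℝ} (hρ : 0 < ρ) (n : ℕ) : 0 < expTrunc ρ n :=
  sum_pos (fun k _ => by positivity) ⟨0, by simp⟩

lemma erlangB_pos {ρ : ℝ} (hρ : 0 < ρ) (M : ℕ) : 0 < erlangB ρ M :=
  div_pos (by positivity) (expTrunc_pos hρ M)

lemma inv_erlangB_eq {ρ : ℝ} (n : ℕ) : (erlangB ρ n)⁻¹ = n ! / ρ ^ n * expTrunc ρ n := by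
  rw [erlangB, inv_div, div_div_eq_mul_div]
  ring

lemma sum_factorial_div_factorial_sub_mul_zpow {ρ : ℝ} (hρ : ρ ≠ 0) (n : ℕ) :
    ∑ m ∈ range (n + 1), ((n ! : ℝ) / (n - m)! ) * ρ ^ (-(m : ℤ)) = (erlangB ρ n)⁻¹ := by
  rw [inv_erlangB_eq, expTrunc, mul_sum, ← sum_range_reflect]
  refine sum_congr rfl fun j hj => ?_
  have hjn : j ≤ n := Nat.lt_succ_iff.mp (mem_range.mp hj)
  rw [show n + 1 - 1 - j = n - j by omega, Nat.sub_sub_self hjn, Nat.cast_sub hjn, neg_sub,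
    zpow_sub₀ hρ, zpow_natCast, zpow_natCast]
  field_simp

lemma inv_erlangB_recursion {ρ : ℝ} (hρ : ρ ≠ 0) (n : ℕ) :
    ρ * (erlangB ρ n)⁻¹ = ρ + n * (erlangB ρ (n - 1))⁻¹ := by
  cases n with
  | zero => simp [erlangB, expTrunc]
  | succ k =>
    simp only [inv_erlangB_eq, expTrunc, sum_range_succ _ (k + 1), factorial_succ,
      Nat.add_sub_cancel]
    push_cast
    field_simp
    ring

lemma sum_Icc_one_comp_sub {A : Type*} [AddCommMonoid A] (f : ℕ → A) (q : ℕ) :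
    ∑ i ∈ Icc 1 q, f (q - i) = ∑ n ∈ range q, f n :=
  sum_nbij' (fun i => q - i) (fun n => q - n)
    (fun i hi => by simp only [mem_Icc, mem_range] at hi ⊢; omega)
    (fun n hn => by simp only [mem_Icc, mem_range] at hn ⊢; omega)
    (fun i hi => by simp only [mem_Icc] at hi; omega)
    (fun n hn => by simp only [mem_range] at hn; omega)
    (fun _ _ => rfl)

section PartialSums

variable {A : Type*} {v : ℤ → A} {f : ℕ → A}

lemma sub_eq_of_eq_sum_range [AddCommGroup A] (hv : ∀ q : ℕ, v q = ∑ n ∈ range q, f n)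
    (n : ℕ) : v (n + 1) - v n = f n := by
  rw [← Nat.cast_succ, hv, hv, sum_range_succ, add_sub_cancel_left]

lemma natCast_mul_sub_pred_eq_of_eq_sum_range [Ring A]
    (hv : ∀ q : ℕ, v q = ∑ n ∈ range q, f n) (n : ℕ) :
    (n : A) * (v n - v (n - 1)) = n * f (n - 1) := by
  cases n with
  | zero => simp
  | succ k =>
    push_cast [Nat.add_sub_cancel]
    rw [add_sub_cancel_right, sub_eq_of_eq_sum_range hv]

end PartialSums

end

theorem howard_equation_exact_solution_symmetric_general
    (M : ℕ)
    (ρ μ lam ω πM g : ℝ)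
    (hρ : 0 < ρ) (hμ : 0 < μ)
    (hlam : lam = μ * ρ)
    (hπ : πM = (ρ ^ M / (Nat.factorial M : ℝ)) /
      (∑ k ∈ Finset.range (M + 1), ρ ^ k / (Nat.factorial k : ℝ)))
    (hg : g = lam * ω * πM)
    (v : ℤ → ℝ)
    (hv0 : ∀ q : ℤ, q ≤ 0 → v q = 0)
    (hv : ∀ q : ℕ, 1 ≤ q →
      v q = g / (μ * ρ) *
        ∑ i ∈ Finset.Icc 1 q, ∑ m ∈ Finset.range (q - i + 1),
          ((Nat.factorial (q - i) : ℝ) / (Nat.factorial (q - i - m) : ℝ)) *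
            ρ ^ (-(m : ℤ))) :
    (∀ q : ℤ, 0 ≤ q → q < (M : ℤ) →
      lam * (v (q + 1) - v q) - μ * (q : ℝ) * (v q - v (q - 1)) = g) ∧
    (-(μ * (M : ℝ)) * (v (M : ℤ) - v ((M : ℤ) - 1)) = g - lam * ω) := by
  set c := g / (μ * ρ)
  have hc : μ * ρ * c = g := mul_div_cancel₀ g (by positivity)
  have hsum : ∀ q : ℕ, v q = ∑ n ∈ range q, c * (erlangB ρ n)⁻¹ := by
    intro q
    rcases q.eq_zero_or_pos with rfl | hq
    · simp [hv0 0 le_rfl]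
    · rw [hv q hq, ← mul_sum]
      simp only [sum_factorial_div_factorial_sub_mul_zpow hρ.ne']
      rw [sum_Icc_one_comp_sub (fun n => (erlangB ρ n)⁻¹)]
  have hstep := sub_eq_of_eq_sum_range hsum
  have hpred := natCast_mul_sub_pred_eq_of_eq_sum_range hsum
  have hrec := inv_erlangB_recursion hρ.ne'
  refine ⟨fun q hq _ => ?_, ?_⟩
  · lift q to ℕ using hq
    rw [Int.cast_natCast, hstep, mul_assoc, hpred, hlam]
    linear_combination μ * c * hrec q + hc
  · have hcB : c = ω * erlangB ρ M := by
      rw [← mul_right_inj' (by positivity : μ * ρ ≠ 0), hc, hg, hlam, hπ, erlangB, expTrunc]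
      ring
    have hBinv : (erlangB ρ M)⁻¹ * erlangB ρ M = 1 := inv_mul_cancel₀ (erlangB_pos hρ M).ne'
    rw [neg_mul, mul_assoc, hpred, ← hc, hcB, hlam]
    linear_combination μ * ω * erlangB ρ M * hrec M - μ * ω * ρ * hBinv

/-- The explicit formula (9) exactly solves Howard's equation for the symmetric
single-rate loss system with capacity `M`, offered load `ρ`, service rate `μ`,
total arrival rate `λ = μ·ρ`, blocking cost `ω`, Erlang blocking probability `π_M`
and average cost rate `g = λ·ω·π_M`. -/
theorem howard_equation_exact_solution_symmetric
    (M : ℕ) (hM : 1 ≤ M)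
    (ρ μ lam ω πM g : ℝ)
    (hρ : 0 < ρ) (hμ : 0 < μ)
    (hlam : lam = μ * ρ)
    (hπ : πM = (ρ ^ M / (Nat.factorial M : ℝ)) /
      (∑ k ∈ Finset.range (M + 1), ρ ^ k / (Nat.factorial k : ℝ)))
    (hg : g = lam * ω * πM)
    (v : ℤ → ℝ)
    (hv0 : ∀ q : ℤ, q ≤ 0 → v q = 0)
    (hv : ∀ q : ℕ, 1 ≤ q →
      v q = g / (μ * ρ) *
        ∑ i ∈ Finset.Icc 1 q, ∑ m ∈ Finset.range (q - i + 1),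
          ((Nat.factorial (q - i) : ℝ) / (Nat.factorial (q - i - m) : ℝ)) *
            ρ ^ (-(m : ℤ))) :
    (∀ q : ℤ, 0 ≤ q → q < (M : ℤ) →
      lam * (v (q + 1) - v q) - μ * (q : ℝ) * (v q - v (q - 1)) = g) ∧
    (-(μ * (M : ℝ)) * (v (M : ℤ) - v ((M : ℤ) - 1)) = g - lam * ω) :=
  howard_equation_exact_solution_symmetric_general M ρ μ lam ω πM g hρ hμ hlam hπ hg v hv0 hv
end

section
/- Fix m ≥ 1, real arrival rates λ_1, …, λ_m > 0, a real number p, and positive integers ω_1, …, ω_m. For n ∈ ℕ and a tuple r⃗ = (r_1, …, r_m) ∈ ℕ^m with Σ r_i ≤ n write C(n; r⃗) = n!/(r_1!⋯r_m!·(n−Σr_i)!), and set C(n; r⃗) = 0 when Σ r_i > n or some entry is negative. For n ∈ ℕ and an integer r define S(n, r) = Σ over tuples r⃗ ∈ ℕ^m with Σ_{i} ω_i·r_i = r of C(n; r⃗)·(1 − p·Σ_i λ_i)^{n−Σ r_i}·Π_{i=1}^{m} (p·λ_i)^{r_i} (a finite sum, since each ω_i ≥ 1), and set S(n, r) = 0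 for r < 0. Then for all n ∈ ℕ and all integers r ≥ 0: S(n+1, r) = (1 − p·Σ_{i=1}^{m} λ_i)·S(n, r) + p·Σ_{i=1}^{m} λ_i·S(n, r − ω_i). -/
/-!
The summand of `S(n, r)` is the multinomial probability of the blocking counts `r⃗` after
`n` steps. Pascal's rule for multinomial coefficients with a rest,
`C(n + 1; r⃗) = C(n; r⃗) + ∑ᵢ C(n; r⃗ - eᵢ)`, gives a one-step recursion for these
probabilities. Summing it over the vectors of cost `r` and reindexing the `i`-th sum by
`r⃗ ↦ r⃗ - eᵢ`, which lowers the cost by `ωᵢ`, gives the recursion for `S`; since every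
`ωᵢ ≥ 1`, only finitely many vectors have cost `r`, so the sums may be split.
-/

open Finset Function
open scoped Nat

@[to_additive]
theorem Fintype.prod_eq_mul_prod_update {ι α M : Type*} [Fintype ι] [DecidableEq ι]
    [CommMonoid M] {g : ι → α → M} {f : ι → α} {i : ι} {b : α} {c : M}
    (h : g i (f i) = c * g i b) : ∏ j, g j (f j) = c * ∏ j, g j (update f i b j) := by
  rw [Fintype.prod_eq_mul_prod_compl i, Fintype.prod_eq_mul_prod_compl i, update_self, h,
    mul_assoc]
  congr 2
  refine Finset.prod_congr rfl fun j hj => ?_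
  rw [update_of_ne (by simpa using hj)]

namespace MultiserviceLoss

variable {ι : Type*} [Fintype ι]

/-- The paper's `C(n; r⃗)`. -/
noncomputable def multinomialWithRest (n : ℕ) (rv : ι → ℕ) : ℝ :=
  if ∑ i, rv i ≤ n then (n ! : ℝ) / ((∏ i, ((rv i)! : ℝ)) * ((n - ∑ i, rv i)! : ℝ)) else 0

theorem sub_mul_multinomialWithRest_succ (n : ℕ) (rv : ι → ℕ) :
    ((n + 1 - ∑ i, rv i : ℕ) : ℝ) * multinomialWithRest (n + 1) rv
      = (n + 1) * multinomialWithRest n rv := by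
  by_cases hs : ∑ i, rv i ≤ n
  · have hrest : n + 1 - ∑ i, rv i = n - ∑ i, rv i + 1 := by omega
    rw [multinomialWithRest, multinomialWithRest, if_pos (by omega), if_pos hs, hrest,
      Nat.factorial_succ, Nat.factorial_succ]
    push_cast
    field_simp
  · simp [multinomialWithRest, hs, show n + 1 - ∑ i, rv i = 0 by omega]

/-- The summand of `S(n, r)`, with `a = 1 - p ∑ λᵢ` and `x i = p λᵢ`. -/
noncomputable def multinomialTerm (a : ℝ) (x : ι → ℝ) (n : ℕ) (rv : ι → ℕ) : ℝ :=
  multinomialWithRest n rv * a ^ (n - ∑ i, rv i) * ∏ i, x i ^ rv i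

section Pascal

variable [DecidableEq ι] {rv : ι → ℕ} {i : ι}

theorem sum_eq_sum_update_pred_add_one (h : 1 ≤ rv i) :
    ∑ j, rv j = ∑ j, update rv i (rv i - 1) j + 1 := by
  rw [Fintype.sum_eq_add_sum_update (g := fun _ k => k) (i := i) (b := rv i - 1) (c := 1)
    (by omega), add_comm]

theorem prod_factorial_eq_mul_prod_update_pred (h : 1 ≤ rv i) :
    ∏ j, ((rv j)! : ℝ) = rv i * ∏ j, ((update rv i (rv i - 1) j)! : ℝ) :=
  Fintype.prod_eq_mul_prod_update (g := fun _ k => (k ! : ℝ)) <| by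
    exact_mod_cast (Nat.mul_factorial_pred (by omega)).symm

theorem prod_pow_eq_mul_prod_pow_update_pred {R : Type*} [CommMonoid R] (x : ι → R)
    (h : 1 ≤ rv i) : ∏ j, x j ^ rv j = x i * ∏ j, x j ^ update rv i (rv i - 1) j :=
  Fintype.prod_eq_mul_prod_update (g := fun j k => x j ^ k) <| by
    rw [← pow_succ', Nat.sub_add_cancel h]

theorem mul_multinomialWithRest_succ (n : ℕ) (h : 1 ≤ rv i) :
    (rv i : ℝ) * multinomialWithRest (n + 1) rv
      = (n + 1) * multinomialWithRest n (update rv i (rv i - 1)) := by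
  have hsum := sum_eq_sum_update_pred_add_one h
  by_cases hs : ∑ j, update rv i (rv i - 1) j ≤ n
  · rw [multinomialWithRest, multinomialWithRest, if_pos (by omega), if_pos hs,
      prod_factorial_eq_mul_prod_update_pred h, hsum, Nat.add_sub_add_right,
      Nat.factorial_succ]
    have : (rv i : ℝ) ≠ 0 := by exact_mod_cast (show rv i ≠ 0 by omega)
    push_cast
    field_simp
  · rw [multinomialWithRest, multinomialWithRest, if_neg (by omega), if_neg hs]
    simp

/-- Pascal's rule, from the two absorption identities and `(n + 1 - ∑ rᵢ) + ∑ rᵢ = n + 1`. -/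
theorem multinomialWithRest_succ (n : ℕ) (rv : ι → ℕ) :
    multinomialWithRest (n + 1) rv = multinomialWithRest n rv
      + ∑ i, if 1 ≤ rv i then multinomialWithRest n (update rv i (rv i - 1)) else 0 := by
  have absorb : ∀ i, (n + 1 : ℝ) *
      (if 1 ≤ rv i then multinomialWithRest n (update rv i (rv i - 1)) else 0)
        = rv i * multinomialWithRest (n + 1) rv := by
    intro i
    split_ifs with h
    · exact (mul_multinomialWithRest_succ n h).symm
    · simp [show rv i = 0 by omega]
  apply mul_left_cancel₀ n.cast_add_one_ne_zero
  rw [mul_add, mul_sum, ← sub_mul_multinomialWithRest_succ, sum_congr rfl fun i _ => absorb i,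
    ← sum_mul, ← add_mul]
  rcases le_or_gt (∑ i, rv i) (n + 1) with hs | hs
  · push_cast [hs]
    ring
  · simp [multinomialWithRest, hs.not_ge]

theorem multinomialTerm_succ (a : ℝ) (x : ι → ℝ) (n : ℕ) (rv : ι → ℕ) :
    multinomialTerm a x (n + 1) rv = a * multinomialTerm a x n rv
      + ∑ i, if 1 ≤ rv i then x i * multinomialTerm a x n (update rv i (rv i - 1)) else 0 := by
  rw [multinomialTerm, multinomialWithRest_succ, add_mul, add_mul, sum_mul, sum_mul]
  congr 1
  · by_cases hs : ∑ i, rv i ≤ n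
    · rw [multinomialTerm, show n + 1 - ∑ i, rv i = n - ∑ i, rv i + 1 by omega, pow_succ]
      ring
    · simp [multinomialTerm, multinomialWithRest, hs]
  · refine sum_congr rfl fun i _ => ?_
    split_ifs with h
    · rw [multinomialTerm, prod_pow_eq_mul_prod_pow_update_pred x h,
        sum_eq_sum_update_pred_add_one h, Nat.add_sub_add_right]
      ring
    · simp

end Pascal

section CostSum

def cost (ω rv : ι → ℕ) : ℤ :=
  ∑ i, (ω i : ℤ) * (rv i : ℤ)

noncomputable def costSum (ω : ι → ℕ) (F : (ι → ℕ) → ℝ) (r : ℤ) : ℝ :=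
  ∑' rv, if cost ω rv = r then F rv else 0

variable {ω : ι → ℕ} {r : ℤ}

theorem cost_nonneg (ω rv : ι → ℕ) : 0 ≤ cost ω rv :=
  sum_nonneg fun _ _ => by positivity

theorem le_cost (hω : ∀ i, 1 ≤ ω i) (rv : ι → ℕ) (i : ι) : (rv i : ℤ) ≤ cost ω rv :=
  calc (rv i : ℤ) ≤ ω i * rv i := le_mul_of_one_le_left (by positivity) (by exact_mod_cast hω i)
    _ ≤ cost ω rv :=
      single_le_sum (f := fun j => (ω j : ℤ) * rv j) (fun _ _ => by positivity) (mem_univ i)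

theorem cost_update_succ [DecidableEq ι] (ω u : ι → ℕ) (i : ι) :
    cost ω (update u i (u i + 1)) = cost ω u + ω i := by
  rw [cost, Fintype.sum_eq_add_sum_update (g := fun j (k : ℕ) => (ω j : ℤ) * k) (i := i)
    (b := u i) (c := ω i) (by simp only [update_self]; push_cast; ring), update_idem, update_eq_self, cost, add_comm]

theorem finite_setOf_cost_eq (hω : ∀ i, 1 ≤ ω i) (r : ℤ) : {rv | cost ω rv = r}.Finite :=
  (Set.Finite.pi fun _ => Set.finite_Iic r.toNat).subset fun rv (hrv : cost ω rv = r) i _ => by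
    show rv i ≤ r.toNat
    have := le_cost hω rv i
    omega

theorem summable_ite_cost_eq (hω : ∀ i, 1 ≤ ω i) (F : (ι → ℕ) → ℝ) (r : ℤ) :
    Summable fun rv => if cost ω rv = r then F rv else 0 :=
  summable_of_hasFiniteSupport <| (finite_setOf_cost_eq hω r).subset fun rv hrv => by
    by_contra h
    exact hrv (if_neg h)

theorem costSum_of_neg (F : (ι → ℕ) → ℝ) (hr : r < 0) : costSum ω F r = 0 := by
  rw [costSum]
  convert tsum_zero with rv
  exact if_neg (by have := cost_nonneg ω rv; omega)

theorem costSum_add (hω : ∀ i, 1 ≤ ω i) (F G : (ι → ℕ) → ℝ) :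
    costSum ω (fun rv => F rv + G rv) r = costSum ω F r + costSum ω G r := by
  rw [costSum, costSum, costSum, ← (summable_ite_cost_eq hω F r).tsum_add
    (summable_ite_cost_eq hω G r)]
  congr 1 with rv
  split_ifs <;> simp

theorem costSum_mul_left (c : ℝ) (F : (ι → ℕ) → ℝ) :
    costSum ω (fun rv => c * F rv) r = c * costSum ω F r := by
  rw [costSum, costSum, ← tsum_mul_left]
  congr 1 with rv
  split_ifs <;> simp

theorem costSum_sum (hω : ∀ i, 1 ≤ ω i) {κ : Type*} (s : Finset κ)
    (F : κ → (ι → ℕ) → ℝ) :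
    costSum ω (fun rv => ∑ k ∈ s, F k rv) r = ∑ k ∈ s, costSum ω (F k) r := by
  simp only [costSum]
  rw [← Summable.tsum_finsetSum fun k _ => summable_ite_cost_eq hω (F k) r]
  congr 1 with rv
  split_ifs <;> simp

/-- Reindex by `u ↦ u + eᵢ`, which is injective, hits every `rv` with `1 ≤ rv i` and raises
the cost by `ω i`. -/
theorem costSum_update_pred [DecidableEq ι] (F : (ι → ℕ) → ℝ) (i : ι) :
    costSum ω (fun rv => if 1 ≤ rv i then F (update rv i (rv i - 1)) else 0) r
      = costSum ω F (r - ω i) := by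
  have hinj : Injective fun u : ι → ℕ => update u i (u i + 1) := by
    intro u v huv
    funext j
    have := congrFun huv j
    rcases eq_or_ne j i with rfl | hji
    · simpa using this
    · simpa [hji] using this
  rw [costSum, costSum, ← hinj.tsum_eq]
  · congr 1 with u
    simp [cost_update_succ, eq_sub_iff_add_eq]
  · intro rv hrv
    have h : 1 ≤ rv i := by
      by_contra h
      exact hrv (by simp [h])
    exact ⟨update rv i (rv i - 1), by simp [Nat.sub_add_cancel h]⟩

theorem costSum_multinomialTerm_succ [DecidableEq ι] (hω : ∀ i, 1 ≤ ω i) (a : ℝ)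
    (x : ι → ℝ) (n : ℕ) (r : ℤ) :
    costSum ω (multinomialTerm a x (n + 1)) r = a * costSum ω (multinomialTerm a x n) r
      + ∑ i, x i * costSum ω (multinomialTerm a x n) (r - ω i) := by
  simp only [funext (multinomialTerm_succ a x n), costSum_add hω, costSum_mul_left,
    costSum_sum hω]
  congr 1
  refine sum_congr rfl fun i _ => ?_
  rw [costSum_update_pred (F := fun u => x i * multinomialTerm a x n u), costSum_mul_left]

end CostSum

end MultiserviceLoss

open MultiserviceLoss in
theorem cost_distribution_recursion_general
    (m : ℕ)
    (lam : Fin m → ℝ)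
    (p : ℝ)
    (ω : Fin m → ℕ) (hω : ∀ i, 1 ≤ ω i)
    (C : ℕ → (Fin m → ℕ) → ℝ)
    (hC : ∀ (n : ℕ) (rv : Fin m → ℕ), (∑ i, rv i) ≤ n →
      C n rv = (Nat.factorial n : ℝ) /
        ((∏ i, (Nat.factorial (rv i) : ℝ)) * (Nat.factorial (n - ∑ i, rv i) : ℝ)))
    (hC0 : ∀ (n : ℕ) (rv : Fin m → ℕ), n < (∑ i, rv i) → C n rv = 0)
    (S : ℕ → ℤ → ℝ)
    (hSneg : ∀ (n : ℕ) (r : ℤ), r < 0 → S n r = 0)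
    (hS : ∀ (n : ℕ) (r : ℤ), 0 ≤ r →
      S n r = ∑' rv : Fin m → ℕ,
        if (∑ i, (ω i : ℤ) * (rv i : ℤ)) = r then
          C n rv * (1 - p * ∑ i, lam i) ^ (n - ∑ i, rv i) *
            ∏ i, (p * lam i) ^ (rv i)
        else 0) :
    ∀ (n : ℕ) (r : ℤ), 0 ≤ r →
      S (n + 1) r = (1 - p * ∑ i, lam i) * S n r
        + p * ∑ i, lam i * S n (r - (ω i : ℤ)) := by
  intro n r _
  obtain rfl : C = multinomialWithRest := funext₂ fun n rv => by
    unfold multinomialWithRest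
    split_ifs with h
    · exact hC n rv h
    · exact hC0 n rv (not_le.mp h)
  have hS_eq : ∀ n r, S n r =
      costSum ω (multinomialTerm (1 - p * ∑ i, lam i) (fun i => p * lam i) n) r := by
    intro n r
    rcases lt_or_ge r 0 with hneg | hnonneg
    · rw [hSneg n r hneg, costSum_of_neg _ hneg]
    · exact hS n r hnonneg
  simp only [hS_eq, costSum_multinomialTerm_succ hω, mul_sum, mul_assoc]

/-- The cost-distribution part of Theorem 2: the discrete cost distribution `S`,
built from multinomial coefficients with remainder, satisfies the one-step cost
recursion of the simpler pricing scheme. -/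
theorem cost_distribution_recursion
    (m : ℕ) (hm : 1 ≤ m)
    (lam : Fin m → ℝ) (hlam : ∀ i, 0 < lam i)
    (p : ℝ)
    (ω : Fin m → ℕ) (hω : ∀ i, 1 ≤ ω i)
    (C : ℕ → (Fin m → ℕ) → ℝ)
    (hC : ∀ (n : ℕ) (rv : Fin m → ℕ), (∑ i, rv i) ≤ n →
      C n rv = (Nat.factorial n : ℝ) /
        ((∏ i, (Nat.factorial (rv i) : ℝ)) * (Nat.factorial (n - ∑ i, rv i) : ℝ)))
    (hC0 : ∀ (n : ℕ) (rv : Fin m → ℕ), n < (∑ i, rv i) → C n rv = 0)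
    (S : ℕ → ℤ → ℝ)
    (hSneg : ∀ (n : ℕ) (r : ℤ), r < 0 → S n r = 0)
    (hS : ∀ (n : ℕ) (r : ℤ), 0 ≤ r →
      S n r = ∑' rv : Fin m → ℕ,
        if (∑ i, (ω i : ℤ) * (rv i : ℤ)) = r then
          C n rv * (1 - p * ∑ i, lam i) ^ (n - ∑ i, rv i) *
            ∏ i, (p * lam i) ^ (rv i)
        else 0) :
    ∀ (n : ℕ) (r : ℤ), 0 ≤ r →
      S (n + 1) r = (1 - p * ∑ i, lam i) * S n r
        + p * ∑ i, lam i * S n (r - (ω i : ℤ)) :=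
  cost_distribution_recursion_general m lam p ω hω C hC hC0 S hSneg hS
end

section
/- Let K ≥ 1, let λ_1, …, λ_K ≥ 0 be reals, ω_1, …, ω_K natural numbers, and p ≥ 0 a real. Let s : ℕ → ℤ → ℝ satisfy: s(n, r) ≥ 0 for all n, r; s(n, r) = 0 for all r < 0; for every n the family (s(n, r))_{r ∈ ℕ} is summable with Σ_{r=0}^{∞} s(n, r) = 1 and the family (r·s(n, r))_{r ∈ ℕ} is summable; and for all n and r, s(n+1, r) = s(n, r) − p·Σ_{j=1}^{K} λ_j·s(n, r) + p·Σ_{j=1}^{K} λ_j·s(n, r − ω_j). Then for every n, Σ_{r=0}^{∞} r·s(n+1, r) = Σ_{r=0}^{∞} r·s(n, r) + p·Σ_{j=1}^{K} λ_j·ω_j. -/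
/-!
The recursion is linear in `s n`. Shifting a distribution on `ℤ` supported on `ℕ` by `ω` adds `ω`
times its total mass (here `1`) to its first moment `M`, so the loss term `-p Λ M` cancels against
the shifted terms `p Σ_j λ_j M`, and only `p Σ_j λ_j ω_j` remains.
-/

open Finset

theorem hasSum_natCast_mul_comp_sub {f : ℤ → ℝ} (hneg : ∀ r : ℤ, r < 0 → f r = 0) {a b : ℝ}
    (hf : HasSum (fun r : ℕ => f r) a) (hrf : HasSum (fun r : ℕ => (r : ℝ) * f r) b) (k : ℕ) :
    HasSum (fun r : ℕ => (r : ℝ) * f (r - k)) (b + k * a) := by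
  have hhead : ∑ i ∈ range k, (i : ℝ) * f (i - k) = 0 :=
    sum_eq_zero fun i hi => by
      rw [hneg _ (by have := mem_range.mp hi; omega), mul_zero]
  rw [← hasSum_nat_add_iff' k, hhead, sub_zero]
  refine (hrf.add (hf.mul_left (k : ℝ))).congr_fun fun r => ?_
  push_cast
  rw [add_sub_cancel_right]
  ring

theorem expected_cost_one_step_increase_general
    (K : ℕ)
    (lam : Fin K → ℝ)
    (ω : Fin K → ℕ)
    (p : ℝ)
    (s : ℕ → ℤ → ℝ)
    (hneg : ∀ (n : ℕ) (r : ℤ), r < 0 → s n r = 0)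
    (hsum : ∀ n : ℕ, Summable (fun r : ℕ => s n r))
    (hsum1 : ∀ n : ℕ, ∑' r : ℕ, s n r = 1)
    (hrsum : ∀ n : ℕ, Summable (fun r : ℕ => (r : ℝ) * s n r))
    (hrec : ∀ (n : ℕ) (r : ℤ),
      s (n + 1) r = s n r - p * (∑ j, lam j) * s n r
        + p * ∑ j, lam j * s n (r - (ω j : ℤ))) :
    ∀ n : ℕ, ∑' r : ℕ, (r : ℝ) * s (n + 1) r
      = (∑' r : ℕ, (r : ℝ) * s n r) + p * ∑ j, lam j * (ω j : ℝ) := by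
  intro n
  set M := ∑' r : ℕ, (r : ℝ) * s n r
  have hM : HasSum (fun r : ℕ => (r : ℝ) * s n r) M := (hrsum n).hasSum
  have hmass : HasSum (fun r : ℕ => s n r) 1 := hsum1 n ▸ (hsum n).hasSum
  have hshift (j : Fin K) := hasSum_natCast_mul_comp_sub (hneg n) hmass hM (ω j)
  have hstep : HasSum (fun r : ℕ => (r : ℝ) * s (n + 1) r)
      (M - p * (∑ j, lam j) * M + p * ∑ j, lam j * (M + ω j * 1)) := by
    refine ((hM.sub (hM.mul_left (p * ∑ j, lam j))).add
      ((hasSum_sum fun j _ => (hshift j).mul_left (lam j)).mul_left p)).congr_fun fun r => ?_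
    simp only [hrec, mul_add, mul_sub, mul_sum]
    ring_nf
  rw [hstep.tsum_eq]
  simp only [mul_one, mul_add, sum_add_distrib, ← sum_mul]
  ring

/-- The core computation of Lemma 1 (equations (75)–(76)): one discrete time step
of length `p` increases the expected accumulated cost by exactly `p · Σ_j λ_j · ω_j`. -/
theorem expected_cost_one_step_increase
    (K : ℕ) (hK : 1 ≤ K)
    (lam : Fin K → ℝ) (hlam : ∀ j, 0 ≤ lam j)
    (ω : Fin K → ℕ)
    (p : ℝ) (hp : 0 ≤ p)
    (s : ℕ → ℤ → ℝ)
    (hpos : ∀ (n : ℕ) (r : ℤ), 0 ≤ s n r)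
    (hneg : ∀ (n : ℕ) (r : ℤ), r < 0 → s n r = 0)
    (hsum : ∀ n : ℕ, Summable (fun r : ℕ => s n r))
    (hsum1 : ∀ n : ℕ, ∑' r : ℕ, s n r = 1)
    (hrsum : ∀ n : ℕ, Summable (fun r : ℕ => (r : ℝ) * s n r))
    (hrec : ∀ (n : ℕ) (r : ℤ),
      s (n + 1) r = s n r - p * (∑ j, lam j) * s n r
        + p * ∑ j, lam j * s n (r - (ω j : ℤ))) :
    ∀ n : ℕ, ∑' r : ℕ, (r : ℝ) * s (n + 1) r
      = (∑' r : ℕ, (r : ℝ) * s n r) + p * ∑ j, lam j * (ω j : ℝ) :=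
  expected_cost_one_step_increase_general K lam ω p s hneg hsum hsum1 hrsum hrec
end

section
/- Let ρ ≠ 0 and a be real numbers with a − ρ not an integer, and let γ_1 be a real number. Define α_1 = γ_1·ρ·(ρ + 2 − a), and recursively for i ≥ 1: γ_{i+1} = α_i/i and α_{i+1} = (ρ/i)·α_i·(2 + ρ − a + i). For J ≥ 1 define f_J : ℤ → ℝ by f_J(q) = Σ_{j=1}^{J} γ_j·Γ(q + a − ρ − j), where Γ is the real Gamma function. Then for every J ≥ 1 and every integer q: f_J(q+2) − (q + a)·f_J(q+1) + ρ·(q+1)·f_J(q) = α_J·Γ(q + a − ρ − J). -/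
/-!
With `G j = Γ(q + a − ρ − j)`, the functional equation `Γ(x + 1) = x Γ(x)` (legitimate because
`a − ρ ∉ ℤ`) turns the `j`-th term of the recurrence operator applied to `f_J` into
`ρ (ρ + 1 + j − a) γ_j G_j − (j − 1) γ_j G_{j−1}`. The recursions for `α`, `γ` say precisely that
`ρ (ρ + 1 + j − a) γ_j = α_j` and `(j − 1) γ_j = α_{j−1}`, so the sum telescopes to `α_J G_J`.
-/

open Finset

lemma Finset.sum_Icc_one_sub_pred {M : Type*} [AddCommGroup M] (f : ℕ → M) (n : ℕ) :
    ∑ i ∈ Icc 1 n, (f i - f (i - 1)) = f n - f 0 := by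
  rw [← Ico_add_one_right_eq_Icc, sum_Ico_eq_sum_range, Nat.add_sub_cancel, ← sum_range_sub]
  simp only [add_comm 1, Nat.add_sub_cancel]

theorem Real.Gamma_three_term_recurrence (q a ρ t : ℝ) (h₀ : q + a - ρ - t ≠ 0)
    (h₁ : q + a - ρ - t + 1 ≠ 0) :
    Gamma ((q + 2) + a - ρ - t) - (q + a) * Gamma ((q + 1) + a - ρ - t)
        + ρ * (q + 1) * Gamma (q + a - ρ - t)
      = ρ * (ρ + 1 + t - a) * Gamma (q + a - ρ - t) - (t - 1) * Gamma (q + a - ρ - (t - 1)) := by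
  set x := q + a - ρ - t
  have h₂ : (q + 2) + a - ρ - t = x + 1 + 1 := by ring
  have h₁' : (q + 1) + a - ρ - t = x + 1 := by ring
  have h₀' : q + a - ρ - (t - 1) = x + 1 := by ring
  rw [h₂, h₁', h₀', Gamma_add_one h₁, Gamma_add_one h₀]
  ring

lemma alpha_eq_of_recursion {ρ a γ₁ : ℝ} {γ α : ℕ → ℝ} (hγ1 : γ 1 = γ₁)
    (hα1 : α 1 = γ₁ * ρ * (ρ + 2 - a))
    (hγ : ∀ i : ℕ, 1 ≤ i → γ (i + 1) = α i / (i : ℝ))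
    (hα : ∀ i : ℕ, 1 ≤ i → α (i + 1) = (ρ / (i : ℝ)) * α i * (2 + ρ - a + (i : ℝ)))
    {j : ℕ} (hj : 1 ≤ j) : α j = ρ * (ρ + 1 + j - a) * γ j := by
  obtain _ | _ | i := j
  · omega
  · rw [hα1, hγ1]; push_cast; ring
  · rw [hα _ (by omega), hγ _ (by omega)]; push_cast; ring

theorem lemma4_inductive_core_general
    (ρ a : ℝ) (hint : ∀ z : ℤ, a - ρ ≠ (z : ℝ))
    (γ α : ℕ → ℝ) (γ₁ : ℝ) (hγ1 : γ 1 = γ₁)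
    (hα1 : α 1 = γ₁ * ρ * (ρ + 2 - a))
    (hγ : ∀ i : ℕ, 1 ≤ i → γ (i + 1) = α i / (i : ℝ))
    (hα : ∀ i : ℕ, 1 ≤ i → α (i + 1) = (ρ / (i : ℝ)) * α i * (2 + ρ - a + (i : ℝ))) :
    ∀ J : ℕ, 1 ≤ J → ∀ q : ℤ,
      (∑ j ∈ Finset.Icc 1 J, γ j * Real.Gamma (((q : ℝ) + 2) + a - ρ - (j : ℝ)))
        - ((q : ℝ) + a) *
          (∑ j ∈ Finset.Icc 1 J, γ j * Real.Gamma (((q : ℝ) + 1) + a - ρ - (j : ℝ)))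
        + ρ * ((q : ℝ) + 1) *
          (∑ j ∈ Finset.Icc 1 J, γ j * Real.Gamma ((q : ℝ) + a - ρ - (j : ℝ)))
      = α J * Real.Gamma ((q : ℝ) + a - ρ - (J : ℝ)) := by
  intro J hJ q
  have hne : ∀ n : ℤ, (q : ℝ) + a - ρ - n ≠ 0 := fun n h ↦
    hint (n - q) (by push_cast; linarith)
  -- `F k = α k Γ(q + a − ρ − k)` for `k ≥ 1`, but `F 0 = 0` whatever `α 0` is.
  let F : ℕ → ℝ := fun k ↦ k * γ (k + 1) * Real.Gamma (q + a - ρ - k)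
  have hF : ∀ k, 1 ≤ k → F k = α k * Real.Gamma (q + a - ρ - k) := fun k hk ↦ by
    have : (k : ℝ) ≠ 0 := by positivity
    simp only [F, hγ k hk]; field_simp
  calc _ = ∑ j ∈ Icc 1 J, (F j - F (j - 1)) := by
        simp only [mul_sum, ← sum_sub_distrib, ← sum_add_distrib]
        refine sum_congr rfl fun j hj ↦ ?_
        have hj : 1 ≤ j := (mem_Icc.1 hj).1
        have h₀ := hne j
        have h₁ := hne (j - 1)
        push_cast at h₀ h₁
        have e := Real.Gamma_three_term_recurrence q a ρ j h₀ (by convert h₁ using 1; ring)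
        rw [hF j hj, alpha_eq_of_recursion hγ1 hα1 hγ hα hj]
        simp only [F, Nat.cast_pred hj, Nat.sub_add_cancel hj]
        linear_combination γ j * e
    _ = α J * Real.Gamma (q + a - ρ - J) := by
        rw [sum_Icc_one_sub_pred, hF J hJ]; simp [F]

/-- The inductive core of Lemma 4: the partial sums `f_J` of Gamma-function terms
satisfy the second-order recurrence with explicit remainder `α_J · Γ(q + a − ρ − J)`. -/
theorem lemma4_inductive_core
    (ρ a : ℝ) (hρ : ρ ≠ 0) (hint : ∀ z : ℤ, a - ρ ≠ (z : ℝ))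
    (γ α : ℕ → ℝ) (γ₁ : ℝ) (hγ1 : γ 1 = γ₁)
    (hα1 : α 1 = γ₁ * ρ * (ρ + 2 - a))
    (hγ : ∀ i : ℕ, 1 ≤ i → γ (i + 1) = α i / (i : ℝ))
    (hα : ∀ i : ℕ, 1 ≤ i → α (i + 1) = (ρ / (i : ℝ)) * α i * (2 + ρ - a + (i : ℝ))) :
    ∀ J : ℕ, 1 ≤ J → ∀ q : ℤ,
      (∑ j ∈ Finset.Icc 1 J, γ j * Real.Gamma (((q : ℝ) + 2) + a - ρ - (j : ℝ)))
        - ((q : ℝ) + a) *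
          (∑ j ∈ Finset.Icc 1 J, γ j * Real.Gamma (((q : ℝ) + 1) + a - ρ - (j : ℝ)))
        + ρ * ((q : ℝ) + 1) *
          (∑ j ∈ Finset.Icc 1 J, γ j * Real.Gamma ((q : ℝ) + a - ρ - (j : ℝ)))
      = α J * Real.Gamma ((q : ℝ) + a - ρ - (J : ℝ)) :=
  lemma4_inductive_core_general ρ a hint γ α γ₁ hγ1 hα1 hγ hα
end
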